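/- arXiv:1104.1696 — 3 statements merged into one kernel-verified Lean document; each statement's English description precedes it below -/
import Mathlib

section
/- Let m, n be positive natural numbers, let A be an m×n complex matrix, and let M be an m×m Hermitian positive definite complex matrix and N an n×n Hermitian positive definite complex matrix. Then there exists exactly one n×m complex matrix X satisfying the four equations A*X*A = A, X*A*X = X, (M*A*X)ᴴ = M*A*X and (N*X*A)ᴴ = N*X*A (where ᴴ denotes conjugate transpose); this X is the weighted Moore-Penrose inverse A†_{M,N} of A. -/
/-!
Write `M = Sᴴ S` and `N = Tᴴ T` with `S`, `T` invertible. Then `X` is an `(M, N)`-weighted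
Moore–Penrose inverse of `A` exactly when `T X S⁻¹` is an ordinary Moore–Penrose inverse of
`S A T⁻¹`, so it suffices to treat the unweighted case. There uniqueness is Penrose's purely
algebraic argument, and `(Aᴴ A)⁺ Aᴴ` is a solution, where the Moore–Penrose inverse `(Aᴴ A)⁺` of
the Hermitian matrix `Aᴴ A` is the functional calculus applied to `x ↦ x⁻¹`: since `0⁻¹ = 0`,
this inverts the nonzero eigenvalues and kills the kernel.
-/

open Matrix ComplexOrder

namespace Matrix

section Penrose

variable {α : Type*} [NonUnitalCommSemiring α] [StarRing α] {m n : Type*} [Fintype m] [Fintype n]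

def IsMoorePenroseInverse (A : Matrix m n α) (X : Matrix n m α) : Prop :=
  A * X * A = A ∧ X * A * X = X ∧ (A * X).IsHermitian ∧ (X * A).IsHermitian

def IsWeightedMoorePenroseInverse (M : Matrix m m α) (N : Matrix n n α) (A : Matrix m n α)
    (X : Matrix n m α) : Prop :=
  A * X * A = A ∧ X * A * X = X ∧ (M * A * X).IsHermitian ∧ (N * X * A).IsHermitian

theorem IsMoorePenroseInverse.unique {A : Matrix m n α} {X Y : Matrix n m α}
    (hX : IsMoorePenroseInverse A X) (hY : IsMoorePenroseInverse A Y) : X = Y := by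
  obtain ⟨hAXA, hXAX, hAX, hXA⟩ := hX
  obtain ⟨hAYA, hYAY, hAY, hYA⟩ := hY
  have hAX_eq : A * X = A * Y := calc
    A * X = (A * Y * A * X)ᴴ := by rw [hAYA, hAX.eq]
    _ = (A * X)ᴴ * (A * Y)ᴴ := by rw [← conjTranspose_mul]; simp only [Matrix.mul_assoc]
    _ = A * X * (A * Y) := by rw [hAX.eq, hAY.eq]
    _ = A * Y := by rw [← Matrix.mul_assoc, hAXA]
  have hXA_eq : X * A = Y * A := calc
    X * A = (X * (A * Y * A))ᴴ := by rw [hAYA, hXA.eq]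
    _ = (Y * A)ᴴ * (X * A)ᴴ := by rw [← conjTranspose_mul]; simp only [Matrix.mul_assoc]
    _ = Y * (A * X * A) := by rw [hXA.eq, hYA.eq]; simp only [Matrix.mul_assoc]
    _ = Y * A := by rw [hAXA]
  calc X = X * A * X := hXAX.symm
    _ = Y * A * Y := by rw [hXA_eq, Matrix.mul_assoc, hAX_eq, ← Matrix.mul_assoc]
    _ = Y := hYAY

end Penrose

section Congruence

variable {α : Type*} [CommRing α] [StarRing α] {m n : Type*} [Fintype m] [Fintype n]
  [DecidableEq m] [DecidableEq n]

theorem isHermitian_conjTranspose_mul_self_mul_iff (S P : Matrix m m α) [Invertible S] :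
    (Sᴴ * S * P).IsHermitian ↔ (S * P * S⁻¹).IsHermitian := by
  have h : S * P * S⁻¹ = (S⁻¹)ᴴ * (Sᴴ * S * P) * S⁻¹ := by
    rw [conjTranspose_nonsing_inv]
    simp only [Matrix.mul_assoc, inv_mul_cancel_left_of_invertible]
  refine ⟨fun hP => h ▸ isHermitian_conjTranspose_mul_mul _ hP, fun hP => ?_⟩
  simpa only [Matrix.mul_assoc, inv_mul_of_invertible, Matrix.mul_one] using
    isHermitian_conjTranspose_mul_mul S hP

theorem isWeightedMoorePenroseInverse_conjTranspose_mul_self_iff (S : Matrix m m α)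
    (T : Matrix n n α) [Invertible S] [Invertible T] (A : Matrix m n α) (X : Matrix n m α) :
    IsWeightedMoorePenroseInverse (Sᴴ * S) (Tᴴ * T) A X ↔
      IsMoorePenroseInverse (S * A * T⁻¹) (T * X * S⁻¹) := by
  have h₁ : S * A * T⁻¹ * (T * X * S⁻¹) * (S * A * T⁻¹) = S * (A * X * A) * T⁻¹ := by
    simp only [Matrix.mul_assoc, inv_mul_cancel_left_of_invertible]
  have h₂ : T * X * S⁻¹ * (S * A * T⁻¹) * (T * X * S⁻¹) = T * (X * A * X) * S⁻¹ := by
    simp only [Matrix.mul_assoc, inv_mul_cancel_left_of_invertible]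
  have h₃ : S * A * T⁻¹ * (T * X * S⁻¹) = S * (A * X) * S⁻¹ := by
    simp only [Matrix.mul_assoc, inv_mul_cancel_left_of_invertible]
  have h₄ : T * X * S⁻¹ * (S * A * T⁻¹) = T * (X * A) * T⁻¹ := by
    simp only [Matrix.mul_assoc, inv_mul_cancel_left_of_invertible]
  refine and_congr ?_ (and_congr ?_ (and_congr ?_ ?_))
  · rw [h₁, mul_left_inj_of_invertible, mul_right_inj_of_invertible]
  · rw [h₂, mul_left_inj_of_invertible, mul_right_inj_of_invertible]
  · rw [h₃, Matrix.mul_assoc (Sᴴ * S), isHermitian_conjTranspose_mul_self_mul_iff]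
  · rw [h₄, Matrix.mul_assoc (Tᴴ * T), isHermitian_conjTranspose_mul_self_mul_iff]

end Congruence

section Existence

variable {𝕜 : Type*} [RCLike 𝕜] {m n : Type*} [Fintype m] [Fintype n] [DecidableEq n]

theorem IsHermitian.isMoorePenroseInverse_cfc_inv {B : Matrix n n 𝕜} (hB : B.IsHermitian) :
    IsMoorePenroseInverse B (cfc (·⁻¹ : ℝ → ℝ) B) := by
  have hmul (f g : ℝ → ℝ) : cfc f B * cfc g B = cfc (fun x ↦ f x * g x) B :=
    (cfc_mul f g B (B.finite_real_spectrum.continuousOn f)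
      (B.finite_real_spectrum.continuousOn g)).symm
  have hid : cfc (fun x : ℝ ↦ x) B = B := cfc_id' ℝ B hB.isSelfAdjoint
  have hcomm : Commute B (cfc (·⁻¹ : ℝ → ℝ) B) := by
    simpa only [hid] using cfc_commute_cfc (fun x : ℝ ↦ x) (·⁻¹) B
  have hBP : (B * cfc (·⁻¹ : ℝ → ℝ) B).IsHermitian := by
    simpa only [← hmul, hid] using (cfc_predicate (fun x : ℝ ↦ x * x⁻¹) B).isHermitian
  refine ⟨?_, ?_, hBP, hcomm.eq ▸ hBP⟩
  · calc B * cfc (·⁻¹ : ℝ → ℝ) B * B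
        = cfc (fun x : ℝ ↦ x) B * cfc (·⁻¹ : ℝ → ℝ) B * cfc (fun x : ℝ ↦ x) B := by rw [hid]
      _ = B := by rw [hmul, hmul]; simp only [mul_inv_mul_cancel, hid]
  · calc cfc (·⁻¹ : ℝ → ℝ) B * B * cfc (·⁻¹ : ℝ → ℝ) B
        = cfc (·⁻¹ : ℝ → ℝ) B * cfc (fun x : ℝ ↦ x) B * cfc (·⁻¹ : ℝ → ℝ) B := by rw [hid]
      _ = cfc (·⁻¹ : ℝ → ℝ) B := by
        rw [hmul, hmul]
        congr 1 with x
        simpa only [inv_inv] using mul_inv_mul_cancel x⁻¹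

theorem isMoorePenroseInverse_cfc_inv_conjTranspose_mul_self_mul_conjTranspose
    (A : Matrix m n 𝕜) : IsMoorePenroseInverse A (cfc (·⁻¹ : ℝ → ℝ) (Aᴴ * A) * Aᴴ) := by
  obtain ⟨hBPB, hPBP, -, hPB⟩ :=
    (isHermitian_conjTranspose_mul_self A).isMoorePenroseInverse_cfc_inv
  set P := cfc (·⁻¹ : ℝ → ℝ) (Aᴴ * A)
  have hAPB : A * (P * (Aᴴ * A)) = A := by
    have h : A * (P * (Aᴴ * A) - 1) = 0 := by
      rw [← conjTranspose_mul_self_mul_eq_zero, Matrix.mul_sub, ← Matrix.mul_assoc, hBPB,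
        Matrix.mul_one, sub_self]
    rwa [Matrix.mul_sub, Matrix.mul_one, sub_eq_zero] at h
  refine ⟨?_, ?_, ?_, ?_⟩
  · rwa [Matrix.mul_assoc, Matrix.mul_assoc]
  · conv_rhs => rw [← hPBP]
    simp only [Matrix.mul_assoc]
  · rw [← Matrix.mul_assoc]
    exact isHermitian_mul_mul_conjTranspose A (IsSelfAdjoint.isHermitian (cfc_predicate _ _))
  · rwa [Matrix.mul_assoc]

theorem existsUnique_isMoorePenroseInverse (A : Matrix m n 𝕜) :
    ∃! X, IsMoorePenroseInverse A X :=
  have hX := isMoorePenroseInverse_cfc_inv_conjTranspose_mul_self_mul_conjTranspose A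
  ⟨_, hX, fun _ hY => hY.unique hX⟩

open scoped MatrixOrder in
theorem existsUnique_isWeightedMoorePenroseInverse [DecidableEq m] {M : Matrix m m 𝕜}
    {N : Matrix n n 𝕜} (hM : M.PosDef) (hN : N.PosDef) (A : Matrix m n 𝕜) :
    ∃! X, IsWeightedMoorePenroseInverse M N A X := by
  obtain ⟨S, hS, rfl⟩ :=
    CStarAlgebra.isStrictlyPositive_iff_eq_star_mul_self.mp hM.isStrictlyPositive
  obtain ⟨T, hT, rfl⟩ :=
    CStarAlgebra.isStrictlyPositive_iff_eq_star_mul_self.mp hN.isStrictlyPositive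
  let := hS.invertible
  let := hT.invertible
  have hiff := isWeightedMoorePenroseInverse_conjTranspose_mul_self_iff S T A
  obtain ⟨Z, hZ, hZ_unique⟩ := existsUnique_isMoorePenroseInverse (S * A * T⁻¹)
  refine ⟨T⁻¹ * Z * S, (hiff _).mpr ?_, fun X hX => ?_⟩
  · simpa only [Matrix.mul_assoc, mul_inv_cancel_left_of_invertible,
      mul_inv_of_invertible, Matrix.mul_one] using hZ
  · rw [← hZ_unique _ ((hiff X).mp hX)]
    simp only [Matrix.mul_assoc, inv_mul_cancel_left_of_invertible,
      inv_mul_of_invertible, Matrix.mul_one]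

end Existence

end Matrix

theorem weighted_moore_penrose_exists_unique_general
    (m n : ℕ)
    (A : Matrix (Fin m) (Fin n) ℂ)
    (M : Matrix (Fin m) (Fin m) ℂ) (N : Matrix (Fin n) (Fin n) ℂ)
    (hM : M.PosDef) (hN : N.PosDef) :
    ∃! X : Matrix (Fin n) (Fin m) ℂ,
      A * X * A = A ∧ X * A * X = X ∧
      (M * A * X)ᴴ = M * A * X ∧ (N * X * A)ᴴ = N * X * A :=
  existsUnique_isWeightedMoorePenroseInverse hM hN A

/-- Existence and uniqueness of the weighted Moore-Penrose inverse of a complex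
matrix `A` with respect to Hermitian positive definite weights `M` and `N`. -/
theorem weighted_moore_penrose_exists_unique
    (m n : ℕ) (hm : 0 < m) (hn : 0 < n)
    (A : Matrix (Fin m) (Fin n) ℂ)
    (M : Matrix (Fin m) (Fin m) ℂ) (N : Matrix (Fin n) (Fin n) ℂ)
    (hM : M.PosDef) (hN : N.PosDef) :
    ∃! X : Matrix (Fin n) (Fin m) ℂ,
      A * X * A = A ∧ X * A * X = X ∧
      (M * A * X)ᴴ = M * A * X ∧ (N * X * A)ᴴ = N * X * A :=
  weighted_moore_penrose_exists_unique_general m n A M N hM hN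
end

section
/- Let m, k be positive natural numbers. Let A be an m×k complex matrix, a an m×1 complex matrix, and form the m×(k+1) matrix Â = [A | a] by appending the column a to A. Let M be an m×m Hermitian positive definite complex matrix, and let N be the (k+1)×(k+1) block matrix N = fromBlocks N₁ l lᴴ ν (with N₁ ∈ ℂ^{k×k}, l ∈ ℂ^{k×1}, ν ∈ ℂ^{1×1}); assume N is Hermitian positive definite (so N₁ is invertible). Let X ∈ ℂ^{k×m} be the weighted Moore-Penrose inverse of A with respect to (M, N₁), i.e. A*X*A = A, X*A*X = X, (M*A*X)ᴴ = M*A*X and (N₁*X*A)ᴴ = N₁*X*A. Set d = X*a ∈ ℂ^{k×1} and c = a − A*d ∈ ℂ^{m×1}, and assume c ≠ 0. Then cᴴ*M*c is an invertible 1×1 matrix; define b⋆ = (cᴴ*M*c)⁻¹ * cᴴ * M ∈ ℂ^{1×m} and the (k+1)×m matrix X' whose top k×m block is X − (d + (I_k − X*A) * N₁⁻¹ * l) * b⋆ and whose bottom row is b⋆. Then X' satisfies Â*X'*Â = Â, X'*Â*X' = X', (M*Â*X')ᴴ = M*Â*X' and (N*X'*Â)ᴴ = N*X'*Â; that is, X'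 is the weighted Moore-Penrose inverse of Â with respect to (M, N). -/
open Matrix ComplexOrder

/-! With `c = a - A X a` and `b = (cᴴ M c)⁻¹ cᴴ M`, the third Penrose equation for `X`
gives `cᴴ M A = 0`, hence `b A = 0` and `b a = 1`. The column `w = (I - X A) N₁⁻¹ l` satisfies
`A w = 0`, and the fourth Penrose equation for `X` gives `N₁ w = l - (X A)ᴴ l`. Then
`[A | a] X' = A X + c b` and `X' [A | a] = fromBlocks (X A) (-w) 0 1`, and the four Penrose
equations for `X'` are read off blockwise. -/

namespace Matrix

theorem PosDef.isUnit_conjTranspose_mul_mul_of_ne_zero {K m o : Type*} [Field K]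
    [PartialOrder K] [StarRing K] [Fintype m] [Fintype o] [DecidableEq o] [Unique o]
    {M : Matrix m m K} (hM : M.PosDef) {c : Matrix m o K} (hc : c ≠ 0) : IsUnit (cᴴ * M * c) := by
  have hcol : c.col default ≠ 0 := fun h ↦ hc <| by
    ext i j
    simpa [Unique.eq_default j] using congrFun h i
  have hinj : Function.Injective c.mulVec :=
    mulVec_injective_iff.2 (linearIndependent_unique_iff.2 hcol)
  exact (hM.conjTranspose_mul_mul_same hinj).isUnit

variable {R : Type*} [CommRing R] [StarRing R] {m n o : Type*} [Fintype m] [Fintype n]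

structure IsWeightedMoorePenroseInverse_s2 (M : Matrix m m R) (N : Matrix n n R)
    (A : Matrix m n R) (X : Matrix n m R) : Prop where
  penrose₁ : A * X * A = A
  penrose₂ : X * A * X = X
  penrose₃ : (M * A * X).IsHermitian
  penrose₄ : (N * X * A).IsHermitian

namespace IsWeightedMoorePenroseInverse_s2

variable {M : Matrix m m R} {N : Matrix n n R} {A : Matrix m n R} {X : Matrix n m R}

lemma conjTranspose_mul_conjTranspose_mul (hX : IsWeightedMoorePenroseInverse_s2 M N A X)
    (hM : M.IsHermitian) : Xᴴ * Aᴴ * M = M * A * X := by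
  simpa only [conjTranspose_mul, hM.eq, Matrix.mul_assoc] using hX.penrose₃.eq

lemma conjTranspose_residual_mul_mul_eq_zero (hX : IsWeightedMoorePenroseInverse_s2 M N A X)
    (hM : M.IsHermitian) (a : Matrix m o R) : (a - A * (X * a))ᴴ * M * A = 0 := by
  have h : Xᴴ * (Aᴴ * (M * A)) = M * A := by
    rw [← Matrix.mul_assoc, ← Matrix.mul_assoc, hX.conjTranspose_mul_conjTranspose_mul hM,
      Matrix.mul_assoc M, Matrix.mul_assoc M, hX.penrose₁]
  simp only [conjTranspose_sub, conjTranspose_mul, Matrix.sub_mul, Matrix.mul_assoc, h, sub_self]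

section Bordering

variable [Fintype o] [DecidableEq o] {a : Matrix m o R} {l : Matrix n o R} {ν : Matrix o o R}

theorem fromCols_fromRows (hX : IsWeightedMoorePenroseInverse_s2 M N A X) (hν : ν.IsHermitian)
    {b : Matrix o m R} {w : Matrix n o R}
    (hbA : b * A = 0) (hba : b * a = 1) (hcb : (M * (a - A * (X * a)) * b).IsHermitian)
    (hAw : A * w = 0) (hNw : N * w = l - (X * A)ᴴ * l) (hlw : (lᴴ * w).IsHermitian) :
    IsWeightedMoorePenroseInverse_s2 M (fromBlocks N l lᴴ ν) (fromCols A a)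
      (fromRows (X - (X * a + w) * b) b) := by
  have hÂX' : fromCols A a * fromRows (X - (X * a + w) * b) b = A * X + (a - A * (X * a)) * b := by
    simp only [fromCols_mul_fromRows, Matrix.mul_sub, Matrix.sub_mul, Matrix.mul_add,
      Matrix.add_mul, ← Matrix.mul_assoc, hAw, Matrix.zero_mul, add_zero]
    abel
  have hX'Â : fromRows (X - (X * a + w) * b) b * fromCols A a = fromBlocks (X * A) (-w) 0 1 := by
    simp only [fromRows_mul_fromCols, Matrix.sub_mul, Matrix.mul_assoc _ b, hbA, hba,
      Matrix.mul_zero, Matrix.mul_one, sub_zero, sub_add_cancel_left]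
  refine ⟨?_, ?_, ?_, ?_⟩
  · rw [hÂX', mul_fromCols, Matrix.add_mul, Matrix.add_mul, hX.penrose₁, Matrix.mul_assoc _ b,
      hbA, Matrix.mul_zero, add_zero, Matrix.mul_assoc _ b, hba, Matrix.mul_one,
      Matrix.mul_assoc A, add_sub_cancel]
  · have hXAw : X * A * w = 0 := by rw [Matrix.mul_assoc, hAw, Matrix.mul_zero]
    rw [hX'Â, fromBlocks_mul_fromRows]
    simp only [Matrix.mul_sub, Matrix.mul_add, ← Matrix.mul_assoc, hX.penrose₂, hXAw, add_zero,
      Matrix.zero_mul, Matrix.one_mul, sub_self, zero_add, Matrix.neg_mul, ← sub_eq_add_neg,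
      sub_sub, Matrix.add_mul]
  · rw [Matrix.mul_assoc M, hÂX', Matrix.mul_add, ← Matrix.mul_assoc, ← Matrix.mul_assoc]
    exact hX.penrose₃.add hcb
  · rw [Matrix.mul_assoc, hX'Â, fromBlocks_multiply]
    simp only [Matrix.mul_zero, Matrix.mul_one, add_zero, Matrix.mul_neg, neg_add_eq_sub, hNw,
      sub_sub_cancel]
    refine IsHermitian.fromBlocks ?_ ?_ (hν.sub hlw)
    · simpa only [Matrix.mul_assoc] using hX.penrose₄
    · rw [conjTranspose_mul, conjTranspose_conjTranspose]

variable [DecidableEq n]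

lemma conjTranspose_mul_eq_mul_mul_inv (hX : IsWeightedMoorePenroseInverse_s2 M N A X)
    (hN : N.IsHermitian) (hNu : IsUnit N.det) : (X * A)ᴴ = N * (X * A) * N⁻¹ := by
  have h : (X * A)ᴴ * N = N * (X * A) := by
    simpa only [conjTranspose_mul, hN.eq, Matrix.mul_assoc] using hX.penrose₄.eq
  rw [← h, Matrix.mul_assoc, mul_nonsing_inv _ hNu, Matrix.mul_one]

lemma isHermitian_one_sub_mul_mul_inv (hX : IsWeightedMoorePenroseInverse_s2 M N A X)
    (hN : N.IsHermitian) (hNu : IsUnit N.det) : ((1 - X * A) * N⁻¹).IsHermitian := by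
  rw [IsHermitian, conjTranspose_mul, conjTranspose_sub, conjTranspose_one,
    hX.conjTranspose_mul_eq_mul_mul_inv hN hNu, hN.inv.eq, Matrix.mul_sub, Matrix.mul_one,
    Matrix.sub_mul, Matrix.one_mul]
  simp only [← Matrix.mul_assoc, nonsing_inv_mul _ hNu, Matrix.one_mul]

theorem fromCols (hX : IsWeightedMoorePenroseInverse_s2 M N A X) (hM : M.IsHermitian)
    (hN : N.IsHermitian) (hNu : IsUnit N.det) (hν : ν.IsHermitian)
    {c : Matrix m o R} (hc : c = a - A * (X * a)) (hS : IsUnit (cᴴ * M * c).det) :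
    IsWeightedMoorePenroseInverse_s2 M (fromBlocks N l lᴴ ν) (fromCols A a)
      (fromRows (X - (X * a + (1 - X * A) * N⁻¹ * l) * ((cᴴ * M * c)⁻¹ * cᴴ * M))
        ((cᴴ * M * c)⁻¹ * cᴴ * M)) := by
  have hcA : cᴴ * M * A = 0 := hc ▸ hX.conjTranspose_residual_mul_mul_eq_zero hM a
  have hbA : (cᴴ * M * c)⁻¹ * cᴴ * M * A = 0 := by
    simp only [Matrix.mul_assoc] at hcA ⊢
    rw [hcA, Matrix.mul_zero]
  have hbc : (cᴴ * M * c)⁻¹ * cᴴ * M * c = 1 := by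
    simpa only [Matrix.mul_assoc] using nonsing_inv_mul _ hS
  have hba : (cᴴ * M * c)⁻¹ * cᴴ * M * a = 1 := by
    rw [show a = c + A * (X * a) by rw [hc, sub_add_cancel], Matrix.mul_add, hbc,
      ← Matrix.mul_assoc, hbA, Matrix.zero_mul, add_zero]
  have hcb : (M * c * ((cᴴ * M * c)⁻¹ * cᴴ * M)).IsHermitian := by
    simpa only [conjTranspose_mul, hM.eq, conjTranspose_conjTranspose, Matrix.mul_assoc] using
      isHermitian_conjTranspose_mul_mul (cᴴ * M)
        (isHermitian_conjTranspose_mul_mul c hM).inv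
  refine hX.fromCols_fromRows hν hbA hba (hc ▸ hcb) ?_ ?_ ?_
  · rw [← Matrix.mul_assoc, ← Matrix.mul_assoc, Matrix.mul_sub, Matrix.mul_one,
      ← Matrix.mul_assoc, hX.penrose₁, sub_self, Matrix.zero_mul, Matrix.zero_mul]
  · rw [hX.conjTranspose_mul_eq_mul_mul_inv hN hNu]
    simp only [← Matrix.mul_assoc, Matrix.mul_sub, Matrix.sub_mul,
      mul_nonsing_inv _ hNu, Matrix.one_mul]
  · simpa only [Matrix.mul_assoc] using
      isHermitian_conjTranspose_mul_mul l (hX.isHermitian_one_sub_mul_mul_inv hN hNu)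

end Bordering

end IsWeightedMoorePenroseInverse_s2

end Matrix

theorem weighted_moore_penrose_partition_step_c_ne_zero_general
    (m k : ℕ)
    (A : Matrix (Fin m) (Fin k) ℂ) (a : Matrix (Fin m) (Fin 1) ℂ)
    (M : Matrix (Fin m) (Fin m) ℂ) (hM : M.PosDef)
    (N₁ : Matrix (Fin k) (Fin k) ℂ) (l : Matrix (Fin k) (Fin 1) ℂ)
    (ν : Matrix (Fin 1) (Fin 1) ℂ)
    (hN : (Matrix.fromBlocks N₁ l lᴴ ν).PosDef)
    (X : Matrix (Fin k) (Fin m) ℂ)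
    (hX1 : A * X * A = A) (hX2 : X * A * X = X)
    (hX3 : (M * A * X)ᴴ = M * A * X) (hX4 : (N₁ * X * A)ᴴ = N₁ * X * A)
    (d : Matrix (Fin k) (Fin 1) ℂ) (hd : d = X * a)
    (c : Matrix (Fin m) (Fin 1) ℂ) (hc : c = a - A * d) (hc0 : c ≠ 0) :
    IsUnit (cᴴ * M * c) ∧
    ∀ b : Matrix (Fin 1) (Fin m) ℂ, b = (cᴴ * M * c)⁻¹ * cᴴ * M →
    ∀ X' : Matrix (Fin k ⊕ Fin 1) (Fin m) ℂ,
      X' = Matrix.fromRows (X - (d + (1 - X * A) * N₁⁻¹ * l) * b) b →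
      (Matrix.fromCols A a) * X' * (Matrix.fromCols A a) = Matrix.fromCols A a ∧
      X' * (Matrix.fromCols A a) * X' = X' ∧
      (M * (Matrix.fromCols A a) * X')ᴴ = M * (Matrix.fromCols A a) * X' ∧
      ((Matrix.fromBlocks N₁ l lᴴ ν) * X' * (Matrix.fromCols A a))ᴴ =
        (Matrix.fromBlocks N₁ l lᴴ ν) * X' * (Matrix.fromCols A a) := by
  have hS : IsUnit (cᴴ * M * c) := hM.isUnit_conjTranspose_mul_mul_of_ne_zero hc0
  refine ⟨hS, fun b hb X' hX' ↦ ?_⟩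
  obtain ⟨hN₁, -, -, hν⟩ := isHermitian_fromBlocks_iff.1 hN.isHermitian
  have hN₁u : IsUnit N₁.det :=
    (isUnit_iff_isUnit_det N₁).1 (hN.submatrix Sum.inl_injective).isUnit
  subst hd hb hX'
  have hX : M.IsWeightedMoorePenroseInverse_s2 N₁ A X := ⟨hX1, hX2, hX3, hX4⟩
  obtain ⟨h₁, h₂, h₃, h₄⟩ :=
    hX.fromCols (l := l) hM.isHermitian hN₁ hN₁u hν hc ((isUnit_iff_isUnit_det _).1 hS)
  exact ⟨h₁, h₂, h₃, h₄⟩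

/-- Recursive step of Wang's partitioning method (case `c ≠ 0`): given the weighted
Moore-Penrose inverse `X` of `A` w.r.t. `(M, N₁)`, the weighted Moore-Penrose inverse
of the augmented matrix `[A | a]` w.r.t. `(M, fromBlocks N₁ l lᴴ ν)` is obtained by
stacking `X - (d + (I - X*A) * N₁⁻¹ * l) * b⋆` on top of the row `b⋆`, where
`d = X*a`, `c = a - A*d ≠ 0` and `b⋆ = (cᴴ*M*c)⁻¹ * cᴴ * M`. -/
theorem weighted_moore_penrose_partition_step_c_ne_zero
    (m k : ℕ) (hm : 0 < m) (hk : 0 < k)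
    (A : Matrix (Fin m) (Fin k) ℂ) (a : Matrix (Fin m) (Fin 1) ℂ)
    (M : Matrix (Fin m) (Fin m) ℂ) (hM : M.PosDef)
    (N₁ : Matrix (Fin k) (Fin k) ℂ) (l : Matrix (Fin k) (Fin 1) ℂ)
    (ν : Matrix (Fin 1) (Fin 1) ℂ)
    (hN : (Matrix.fromBlocks N₁ l lᴴ ν).PosDef)
    (X : Matrix (Fin k) (Fin m) ℂ)
    (hX1 : A * X * A = A) (hX2 : X * A * X = X)
    (hX3 : (M * A * X)ᴴ = M * A * X) (hX4 : (N₁ * X * A)ᴴ = N₁ * X * A)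
    (d : Matrix (Fin k) (Fin 1) ℂ) (hd : d = X * a)
    (c : Matrix (Fin m) (Fin 1) ℂ) (hc : c = a - A * d) (hc0 : c ≠ 0) :
    IsUnit (cᴴ * M * c) ∧
    ∀ b : Matrix (Fin 1) (Fin m) ℂ, b = (cᴴ * M * c)⁻¹ * cᴴ * M →
    ∀ X' : Matrix (Fin k ⊕ Fin 1) (Fin m) ℂ,
      X' = Matrix.fromRows (X - (d + (1 - X * A) * N₁⁻¹ * l) * b) b →
      (Matrix.fromCols A a) * X' * (Matrix.fromCols A a) = Matrix.fromCols A a ∧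
      X' * (Matrix.fromCols A a) * X' = X' ∧
      (M * (Matrix.fromCols A a) * X')ᴴ = M * (Matrix.fromCols A a) * X' ∧
      ((Matrix.fromBlocks N₁ l lᴴ ν) * X' * (Matrix.fromCols A a))ᴴ =
        (Matrix.fromBlocks N₁ l lᴴ ν) * X' * (Matrix.fromCols A a) :=
  weighted_moore_penrose_partition_step_c_ne_zero_general m k A a M hM N₁ l ν hN X hX1 hX2 hX3 hX4 d
    hd c hc hc0
end

section
/- Let m, k be positive natural numbers. Let A be an m×k complex matrix, a an m×1 complex matrix, M an m×m Hermitian positive definite complex matrix, and let N = fromBlocks N₁ l lᴴ ν be a (k+1)×(k+1) Hermitian positive definite complex matrix (with N₁ ∈ ℂ^{k×k}, l ∈ ℂ^{k×1}, ν ∈ ℂ^{1×1}). Let X ∈ ℂ^{k×m} be the weighted Moore-Penrose inverse of A with respect to (M, N₁). Set d = X*a and c = a − A*d, and assume c = 0. Then the sole entry of the 1×1 matrix δ = ν + dᴴ*N₁*d − (dᴴ*l + lᴴ*d) − lᴴ*(I_k − X*A)*N₁⁻¹*l is a real number and is strictly positive; in particular δ is invertible. -/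
/-!
`P = X * A` is an idempotent that is self-adjoint for the form `N₁`, and `c = 0` puts `d` in its
range. Completing the square then gives
`δ = (ν - lᴴ * N₁⁻¹ * l) + wᴴ * N₁ * w` with `w = P * (d - N₁⁻¹ * l)`.
The first summand is the Schur complement of `N₁` in the positive definite block matrix, hence
positive definite, and the second is positive semidefinite; so the `1 × 1` matrix `δ` is positive
definite.
-/

open Matrix ComplexOrder

namespace Matrix

variable {m n o : Type*}

theorem PosDef.toBlocks₁₁ {R : Type*} [CommRing R] [PartialOrder R] [StarRing R]
    {M : Matrix (m ⊕ n) (m ⊕ n) R} (hM : M.PosDef) : M.toBlocks₁₁.PosDef :=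
  hM.submatrix Sum.inl_injective

theorem PosDef.schur_complement₁₁ {𝕜 : Type*} [RCLike 𝕜] [Fintype m] [Fintype n]
    [DecidableEq m] [DecidableEq n] {A : Matrix m m 𝕜} {B : Matrix m n 𝕜} {D : Matrix n n 𝕜}
    (h : (fromBlocks A B Bᴴ D).PosDef) : (D - Bᴴ * A⁻¹ * B).PosDef := by
  have hA : A.PosDef := by simpa using h.toBlocks₁₁
  let := hA.isUnit.invertible
  refine ((PosDef.fromBlocks₁₁ B D hA).mp h.posSemidef).posDef_iff_isUnit.mpr ?_
  have hdet := (isUnit_iff_isUnit_det _).mp h.isUnit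
  rw [det_fromBlocks₁₁, invOf_eq_nonsing_inv] at hdet
  exact (isUnit_iff_isUnit_det _).mpr (isUnit_of_mul_isUnit_right hdet)

theorem conjTranspose_mul_mul_proj_sub_inv_mul {R : Type*} [CommRing R] [StarRing R] [Fintype n]
    [DecidableEq n] {N P : Matrix n n R} {d l : Matrix n o R}
    (hN : Nᴴ = N) (hNdet : IsUnit N.det) (hPP : P * P = P) (hNP : (N * P)ᴴ = N * P)
    (hPd : P * d = d) :
    (P * (d - N⁻¹ * l))ᴴ * N * (P * (d - N⁻¹ * l))
      = dᴴ * N * d - (dᴴ * l + lᴴ * d) + lᴴ * P * N⁻¹ * l := by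
  set e := N⁻¹ * l
  have hPN : Pᴴ * N = N * P := by rw [← hNP, conjTranspose_mul, hN]
  have heN : eᴴ * N = lᴴ := by
    rw [conjTranspose_mul, conjTranspose_nonsing_inv, hN, Matrix.mul_assoc,
      nonsing_inv_mul N hNdet, Matrix.mul_one]
  have hed : (P * e)ᴴ * N * d = lᴴ * d := by
    rw [conjTranspose_mul, Matrix.mul_assoc, Matrix.mul_assoc, ← Matrix.mul_assoc Pᴴ, hPN,
      Matrix.mul_assoc, hPd, ← Matrix.mul_assoc, heN]
  have hde : dᴴ * N * (P * e) = dᴴ * l := by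
    simpa [hN, Matrix.mul_assoc] using congrArg conjTranspose hed
  have hee : (P * e)ᴴ * N * (P * e) = lᴴ * P * e := by
    rw [conjTranspose_mul, Matrix.mul_assoc, Matrix.mul_assoc, ← Matrix.mul_assoc Pᴴ, hPN,
      Matrix.mul_assoc, ← Matrix.mul_assoc P, hPP, ← Matrix.mul_assoc, heN, Matrix.mul_assoc]
  rw [Matrix.mul_sub, hPd, conjTranspose_sub]
  simp only [Matrix.sub_mul, Matrix.mul_sub, hed, hde, hee, Matrix.mul_assoc]
  abel

end Matrix

theorem weighted_moore_penrose_delta_pos_general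
    (m k : ℕ)
    (A : Matrix (Fin m) (Fin k) ℂ) (a : Matrix (Fin m) (Fin 1) ℂ)
    (N₁ : Matrix (Fin k) (Fin k) ℂ) (l : Matrix (Fin k) (Fin 1) ℂ)
    (ν : Matrix (Fin 1) (Fin 1) ℂ)
    (hN : (Matrix.fromBlocks N₁ l lᴴ ν).PosDef)
    (X : Matrix (Fin k) (Fin m) ℂ)
    (hX2 : X * A * X = X)
    (hX4 : (N₁ * X * A)ᴴ = N₁ * X * A)
    (d : Matrix (Fin k) (Fin 1) ℂ) (hd : d = X * a)
    (c : Matrix (Fin m) (Fin 1) ℂ) (hc : c = a - A * d) (hc0 : c = 0)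
    (δ : Matrix (Fin 1) (Fin 1) ℂ)
    (hδ : δ = ν + dᴴ * N₁ * d - (dᴴ * l + lᴴ * d) - lᴴ * (1 - X * A) * N₁⁻¹ * l) :
    (δ 0 0).im = 0 ∧ 0 < (δ 0 0).re ∧ IsUnit δ := by
  have hN₁ : N₁.PosDef := by simpa using hN.toBlocks₁₁
  have hAd : A * d = a := by
    rw [hc] at hc0
    exact (sub_eq_zero.mp hc0).symm
  have hPd : X * A * d = d := by rw [Matrix.mul_assoc, hAd, hd]
  have hPP : X * A * (X * A) = X * A := by rw [← Matrix.mul_assoc, hX2]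
  have hNP : (N₁ * (X * A))ᴴ = N₁ * (X * A) := by rwa [← Matrix.mul_assoc]
  have hδ_eq : δ = (ν - lᴴ * N₁⁻¹ * l)
      + (X * A * (d - N₁⁻¹ * l))ᴴ * N₁ * (X * A * (d - N₁⁻¹ * l)) := by
    rw [hδ, conjTranspose_mul_mul_proj_sub_inv_mul hN₁.isHermitian
      ((isUnit_iff_isUnit_det _).mp hN₁.isUnit) hPP hNP hPd]
    simp only [Matrix.mul_sub, Matrix.sub_mul, Matrix.mul_one]
    abel
  have hδ_pos : δ.PosDef := hδ_eq ▸
    hN.schur_complement₁₁.add_posSemidef (hN₁.posSemidef.conjTranspose_mul_mul_same _)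
  obtain ⟨hre, him⟩ := Complex.pos_iff.mp (hδ_pos.diag_pos (i := 0))
  exact ⟨him.symm, hre, hδ_pos.isUnit⟩

/-- In the `c = 0` case of Wang's partitioning method, the scalar
`δ = ν + dᴴ*N₁*d - (dᴴ*l + lᴴ*d) - lᴴ*(I - X*A)*N₁⁻¹*l` is a strictly positive real
number; in particular the 1×1 matrix `δ` is invertible. -/
theorem weighted_moore_penrose_delta_pos
    (m k : ℕ) (hm : 0 < m) (hk : 0 < k)
    (A : Matrix (Fin m) (Fin k) ℂ) (a : Matrix (Fin m) (Fin 1) ℂ)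
    (M : Matrix (Fin m) (Fin m) ℂ) (hM : M.PosDef)
    (N₁ : Matrix (Fin k) (Fin k) ℂ) (l : Matrix (Fin k) (Fin 1) ℂ)
    (ν : Matrix (Fin 1) (Fin 1) ℂ)
    (hN : (Matrix.fromBlocks N₁ l lᴴ ν).PosDef)
    (X : Matrix (Fin k) (Fin m) ℂ)
    (hX1 : A * X * A = A) (hX2 : X * A * X = X)
    (hX3 : (M * A * X)ᴴ = M * A * X) (hX4 : (N₁ * X * A)ᴴ = N₁ * X * A)
    (d : Matrix (Fin k) (Fin 1) ℂ) (hd : d = X * a)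
    (c : Matrix (Fin m) (Fin 1) ℂ) (hc : c = a - A * d) (hc0 : c = 0)
    (δ : Matrix (Fin 1) (Fin 1) ℂ)
    (hδ : δ = ν + dᴴ * N₁ * d - (dᴴ * l + lᴴ * d) - lᴴ * (1 - X * A) * N₁⁻¹ * l) :
    (δ 0 0).im = 0 ∧ 0 < (δ 0 0).re ∧ IsUnit δ :=
  weighted_moore_penrose_delta_pos_general m k A a N₁ l ν hN X hX2 hX4 d hd c hc hc0 δ hδ
end
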